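/- arXiv:2207.02385 — 3 statements merged into one kernel-verified Lean document; each statement's English description precedes it below -/
import Mathlib

section
/- (Nonlinear Gronwall inequality) Let t₀ ≥ 0, let a, b, Y : [t₀, ∞) → [0, ∞) be continuous, let c ≥ 0 and 0 ≤ α < 1. Assume that Y(t) ≤ c + ∫_{t₀}^{t} ( a(s)·Y(s) + b(s)·Y(s)^α ) ds for all t ≥ t₀. Then for all t ≥ t₀: Y(t) ≤ [ c^{1−α} · exp( (1−α) ∫_{t₀}^{t} a(r) dr ) + (1−α) ∫_{t₀}^{t} b(s) · exp( (1−α) ∫_{s}^{t} a(r) dr ) ds ]^{1/(1−α)}. -/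
/-!
For `c' > c` the function `Z t = c' + ∫_{t₀}^t (a Y + b Y^α)` is strictly positive, dominates `Y`,
and satisfies `Z' ≤ a Z + b Z^α`. The Bernoulli substitution `W = Z^{1-α}` linearises this to
`W' ≤ (1-α) (a W + b)`, and a linear differential inequality `W' ≤ p W + q` integrates because
`W e^{-∫p} - ∫ q e^{-∫p}` is antitone. Letting `c' → c` gives the bound.
-/

open MeasureTheory intervalIntegral Set Real Filter

section Primitive

variable {f : ℝ → ℝ} {a b : ℝ}

theorem ContinuousOn.continuousOn_primitive_Icc (hf : ContinuousOn f (Icc a b)) :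
    ContinuousOn (fun u => ∫ s in a..u, f s) (Icc a b) := by
  rcases le_or_gt a b with hab | hba
  · rw [← uIcc_of_le hab] at hf ⊢
    exact continuousOn_primitive_interval hf.integrableOn_uIcc
  · simp [Icc_eq_empty_of_lt hba]

theorem ContinuousOn.hasDerivAt_primitive_of_mem_Ioo (hf : ContinuousOn f (Icc a b)) {x : ℝ}
    (hx : x ∈ Ioo a b) : HasDerivAt (fun u => ∫ s in a..u, f s) (f x) x :=
  integral_hasDerivAt_right
    ((hf.mono (Icc_subset_Icc_right hx.2.le)).intervalIntegrable_of_Icc hx.1.le)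
    ((hf.mono Ioo_subset_Icc_self).stronglyMeasurableAtFilter isOpen_Ioo x hx)
    (hf.continuousAt (Icc_mem_nhds hx.1 hx.2))

end Primitive

section LinearGronwall

variable {W W' p q : ℝ → ℝ} {t₀ T : ℝ}

theorem antitoneOn_mul_exp_neg_primitive_sub_primitive
    (hW : ContinuousOn W (Icc t₀ T)) (hW' : ∀ x ∈ Ioo t₀ T, HasDerivAt W (W' x) x)
    (hp : ContinuousOn p (Icc t₀ T)) (hq : ContinuousOn q (Icc t₀ T))
    (hle : ∀ x ∈ Ioo t₀ T, W' x ≤ p x * W x + q x) :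
    AntitoneOn (fun t => W t * exp (-∫ r in t₀..t, p r)
      - ∫ s in t₀..t, q s * exp (-∫ r in t₀..s, p r)) (Icc t₀ T) := by
  have hP := hp.continuousOn_primitive_Icc
  have hqe : ContinuousOn (fun s => q s * exp (-∫ r in t₀..s, p r)) (Icc t₀ T) :=
    hq.mul hP.neg.rexp
  refine antitoneOn_of_hasDerivWithinAt_nonpos (convex_Icc t₀ T)
    ((hW.mul hP.neg.rexp).sub hqe.continuousOn_primitive_Icc)
    (f' := fun x => (W' x - (p x * W x + q x)) * exp (-∫ r in t₀..x, p r)) ?_ ?_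
  · intro x hx
    rw [interior_Icc] at hx
    have hE : HasDerivAt (fun t => exp (-∫ r in t₀..t, p r))
        (exp (-∫ r in t₀..x, p r) * -p x) x :=
      (hp.hasDerivAt_primitive_of_mem_Ioo hx).neg.exp
    exact ((((hW' x hx).fun_mul hE).fun_sub (hqe.hasDerivAt_primitive_of_mem_Ioo hx)).congr_deriv
      (by ring)).hasDerivWithinAt
  · intro x hx
    rw [interior_Icc] at hx
    exact mul_nonpos_of_nonpos_of_nonneg (sub_nonpos.2 (hle x hx)) (exp_pos _).le

theorem linear_gronwall_of_hasDerivAt (hT : t₀ ≤ T)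
    (hW : ContinuousOn W (Icc t₀ T)) (hW' : ∀ x ∈ Ioo t₀ T, HasDerivAt W (W' x) x)
    (hp : ContinuousOn p (Icc t₀ T)) (hq : ContinuousOn q (Icc t₀ T))
    (hle : ∀ x ∈ Ioo t₀ T, W' x ≤ p x * W x + q x) :
    W T ≤ W t₀ * exp (∫ r in t₀..T, p r) + ∫ s in t₀..T, q s * exp (∫ r in s..T, p r) := by
  have hanti := antitoneOn_mul_exp_neg_primitive_sub_primitive hW hW' hp hq hle
    (left_mem_Icc.2 hT) (right_mem_Icc.2 hT) hT
  simp only [integral_same, neg_zero, exp_zero, mul_one, sub_zero] at hanti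
  set P := ∫ r in t₀..T, p r
  have hp_int : ∀ s ∈ Icc t₀ T, IntervalIntegrable p volume t₀ s := fun s hs =>
    (hp.mono (Icc_subset_Icc_right hs.2)).intervalIntegrable_of_Icc hs.1
  have hsplit : ∫ s in t₀..T, q s * exp (∫ r in s..T, p r)
      = exp P * ∫ s in t₀..T, q s * exp (-∫ r in t₀..s, p r) := by
    rw [← intervalIntegral.integral_const_mul]
    refine integral_congr fun s hs => ?_
    rw [uIcc_of_le hT] at hs
    rw [← integral_interval_sub_left (hp_int T (right_mem_Icc.2 hT)) (hp_int s hs),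
      sub_eq_add_neg, exp_add]
    ring
  calc W T = W T * exp (-P) * exp P := by
        rw [mul_assoc, ← exp_add, neg_add_cancel, exp_zero, mul_one]
    _ ≤ (W t₀ + ∫ s in t₀..T, q s * exp (-∫ r in t₀..s, p r)) * exp P := by
        gcongr; linarith
    _ = _ := by rw [hsplit]; ring

end LinearGronwall

-- The left side is `(Z ^ (1 - α))'` in the form produced by `HasDerivAt.rpow_const`.
theorem mul_rpow_sub_one_le_of_le_add_mul_rpow {z d a b α : ℝ} (hz : 0 < z) (hα : α ≤ 1)
    (hd : d ≤ a * z + b * z ^ α) :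
    d * (1 - α) * z ^ (1 - α - 1) ≤ (1 - α) * a * z ^ (1 - α) + (1 - α) * b := by
  have hz_mul : z * z ^ (-α) = z ^ (1 - α) := by
    rw [sub_eq_add_neg, rpow_add hz, rpow_one]
  have hzα_mul : z ^ α * z ^ (-α) = 1 := by
    rw [← rpow_add hz, add_neg_cancel, rpow_zero]
  calc d * (1 - α) * z ^ (1 - α - 1) = (1 - α) * (d * z ^ (-α)) := by
        rw [sub_sub_cancel_left]; ring
    _ ≤ (1 - α) * ((a * z + b * z ^ α) * z ^ (-α)) := by
        gcongr
    _ = (1 - α) * (a * (z * z ^ (-α)) + b * (z ^ α * z ^ (-α))) := by ring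
    _ = (1 - α) * a * z ^ (1 - α) + (1 - α) * b := by rw [hz_mul, hzα_mul]; ring

section Bihari

variable {Z Z' a b : ℝ → ℝ} {t₀ T α : ℝ}

theorem rpow_one_sub_le_of_hasDerivAt_le (hT : t₀ ≤ T) (hα : α ≤ 1)
    (hZ : ContinuousOn Z (Icc t₀ T)) (hZpos : ∀ x ∈ Icc t₀ T, 0 < Z x)
    (hZ' : ∀ x ∈ Ioo t₀ T, HasDerivAt Z (Z' x) x)
    (ha : ContinuousOn a (Icc t₀ T)) (hb : ContinuousOn b (Icc t₀ T))
    (hle : ∀ x ∈ Ioo t₀ T, Z' x ≤ a x * Z x + b x * Z x ^ α) :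
    Z T ^ (1 - α) ≤ Z t₀ ^ (1 - α) * exp ((1 - α) * ∫ r in t₀..T, a r)
      + (1 - α) * ∫ s in t₀..T, b s * exp ((1 - α) * ∫ r in s..T, a r) := by
  have h := linear_gronwall_of_hasDerivAt (W := fun t => Z t ^ (1 - α))
    (p := fun x => (1 - α) * a x) (q := fun x => (1 - α) * b x) hT
    (hZ.rpow_const fun x hx => Or.inl (hZpos x hx).ne')
    (fun x hx => (hZ' x hx).rpow_const (Or.inl (hZpos x (Ioo_subset_Icc_self hx)).ne'))
    (ha.const_smul (1 - α)) (hb.const_smul (1 - α))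
    (fun x hx => mul_rpow_sub_one_le_of_le_add_mul_rpow (hZpos x (Ioo_subset_Icc_self hx)) hα
      (hle x hx))
  simpa only [intervalIntegral.integral_const_mul, mul_assoc] using h

end Bihari

section IntegralInequality

variable {Y a b : ℝ → ℝ} {t₀ T c c' α : ℝ}

theorem nonlinear_gronwall_Icc_of_lt (hT : t₀ ≤ T) (hα0 : 0 ≤ α) (hα1 : α < 1)
    (ha : ContinuousOn a (Icc t₀ T)) (hb : ContinuousOn b (Icc t₀ T))
    (hY : ContinuousOn Y (Icc t₀ T))
    (ha0 : ∀ t ∈ Icc t₀ T, 0 ≤ a t) (hb0 : ∀ t ∈ Icc t₀ T, 0 ≤ b t)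
    (hY0 : ∀ t ∈ Icc t₀ T, 0 ≤ Y t)
    (hYle : ∀ t ∈ Icc t₀ T, Y t ≤ c + ∫ s in t₀..t, (a s * Y s + b s * Y s ^ α))
    (hcc' : c < c') :
    Y T ≤ (c' ^ (1 - α) * exp ((1 - α) * ∫ r in t₀..T, a r)
        + (1 - α) * ∫ s in t₀..T, b s * exp ((1 - α) * ∫ r in s..T, a r)) ^ (1 / (1 - α)) := by
  set f := fun s => a s * Y s + b s * Y s ^ α
  have hf : ContinuousOn f (Icc t₀ T) :=
    (ha.mul hY).add (hb.mul (hY.rpow_const fun _ _ => Or.inr hα0))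
  set Z := fun t => c' + ∫ s in t₀..t, f s
  have hYZ : ∀ t ∈ Icc t₀ T, Y t + (c' - c) ≤ Z t := fun t ht => by
    linarith [hYle t ht]
  have hZpos : ∀ t ∈ Icc t₀ T, 0 < Z t := fun t ht => by
    linarith [hYZ t ht, hY0 t ht]
  have hf_le : ∀ x ∈ Ioo t₀ T, f x ≤ a x * Z x + b x * Z x ^ α := fun x hx => by
    have hx' := Ioo_subset_Icc_self hx
    have hYZx : Y x ≤ Z x := by linarith [hYZ x hx']
    exact add_le_add (mul_le_mul_of_nonneg_left hYZx (ha0 x hx'))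
      (mul_le_mul_of_nonneg_left (rpow_le_rpow (hY0 x hx') hYZx hα0) (hb0 x hx'))
  have hZ_rpow := rpow_one_sub_le_of_hasDerivAt_le (Z := Z) hT hα1.le
    (continuousOn_const.add hf.continuousOn_primitive_Icc) hZpos
    (fun x hx => (hf.hasDerivAt_primitive_of_mem_Ioo hx).const_add c') ha hb hf_le
  have hZt₀ : Z t₀ = c' := by simp [Z]
  rw [hZt₀] at hZ_rpow
  have hZT := hZpos T (right_mem_Icc.2 hT)
  calc Y T ≤ Z T := by linarith [hYZ T (right_mem_Icc.2 hT)]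
    _ = (Z T ^ (1 - α)) ^ (1 / (1 - α)) := by
        rw [one_div, rpow_rpow_inv hZT.le (by linarith)]
    _ ≤ _ := by gcongr

end IntegralInequality

theorem nonlinear_gronwall_general
    (t₀ : ℝ)
    (a b Y : ℝ → ℝ)
    (ha : ContinuousOn a (Set.Ici t₀)) (hb : ContinuousOn b (Set.Ici t₀))
    (hY : ContinuousOn Y (Set.Ici t₀))
    (ha0 : ∀ t ∈ Set.Ici t₀, 0 ≤ a t) (hb0 : ∀ t ∈ Set.Ici t₀, 0 ≤ b t)
    (hY0 : ∀ t ∈ Set.Ici t₀, 0 ≤ Y t)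
    (c α : ℝ) (hα0 : 0 ≤ α) (hα1 : α < 1)
    (hYle : ∀ t, t₀ ≤ t →
      Y t ≤ c + ∫ s in t₀..t, (a s * Y s + b s * Y s ^ α)) :
    ∀ t, t₀ ≤ t →
      Y t ≤ (c ^ (1 - α) * Real.exp ((1 - α) * ∫ r in t₀..t, a r)
        + (1 - α) * ∫ s in t₀..t, b s * Real.exp ((1 - α) * ∫ r in s..t, a r))
          ^ (1 / (1 - α)) := by
  intro T hT
  have hβ : 0 < 1 - α := by linarith
  have hbound : ContinuousAt (fun c' => (c' ^ (1 - α) * exp ((1 - α) * ∫ r in t₀..T, a r)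
      + (1 - α) * ∫ s in t₀..T, b s * exp ((1 - α) * ∫ r in s..T, a r)) ^ (1 / (1 - α))) c :=
    (((continuousAt_id.rpow_const (Or.inr hβ.le)).mul_const _).add_const _).rpow_const
      (Or.inr (by positivity))
  refine ge_of_tendsto (hbound.tendsto.mono_left (nhdsWithin_le_nhds (s := Ioi c))) ?_
  filter_upwards [self_mem_nhdsWithin] with c' hc'
  have hIcc : Icc t₀ T ⊆ Ici t₀ := Icc_subset_Ici_self
  exact nonlinear_gronwall_Icc_of_lt hT hα0 hα1 (ha.mono hIcc) (hb.mono hIcc) (hY.mono hIcc)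
    (fun t ht => ha0 t ht.1) (fun t ht => hb0 t ht.1) (fun t ht => hY0 t ht.1)
    (fun t ht => hYle t ht.1) hc'

/-- Nonlinear Gronwall inequality: if `Y(t) ≤ c + ∫_{t₀}^t (a(s) Y(s) + b(s) Y(s)^α) ds`
for all `t ≥ t₀`, with `a, b, Y` continuous nonnegative, `c ≥ 0`, `0 ≤ α < 1`, then
`Y(t) ≤ [c^{1−α} exp((1−α)∫_{t₀}^t a) + (1−α)∫_{t₀}^t b(s) exp((1−α)∫_s^t a) ds]^{1/(1−α)}`. -/
theorem nonlinear_gronwall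
    (t₀ : ℝ) (ht₀ : 0 ≤ t₀)
    (a b Y : ℝ → ℝ)
    (ha : ContinuousOn a (Set.Ici t₀)) (hb : ContinuousOn b (Set.Ici t₀))
    (hY : ContinuousOn Y (Set.Ici t₀))
    (ha0 : ∀ t ∈ Set.Ici t₀, 0 ≤ a t) (hb0 : ∀ t ∈ Set.Ici t₀, 0 ≤ b t)
    (hY0 : ∀ t ∈ Set.Ici t₀, 0 ≤ Y t)
    (c α : ℝ) (hc : 0 ≤ c) (hα0 : 0 ≤ α) (hα1 : α < 1)
    (hYle : ∀ t, t₀ ≤ t →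
      Y t ≤ c + ∫ s in t₀..t, (a s * Y s + b s * Y s ^ α)) :
    ∀ t, t₀ ≤ t →
      Y t ≤ (c ^ (1 - α) * Real.exp ((1 - α) * ∫ r in t₀..t, a r)
        + (1 - α) * ∫ s in t₀..t, b s * Real.exp ((1 - α) * ∫ r in s..t, a r))
          ^ (1 / (1 - α)) :=
  nonlinear_gronwall_general t₀ a b Y ha hb hY ha0 hb0 hY0 c α hα0 hα1 hYle
end

section
/- (Gronwall inequality with logarithmic nonlinearity) Let X, a, M, c₁, c₂ : [0, ∞) → [0, ∞) with X continuous, M nondecreasing with M(0) > 1, and c₁, c₂ locally integrable. Assume that for every t ≥ 0, X(t) + a(t) ≤ M(t) + ∫₀^t c₁(s)·X(s) ds + ∫₀^t c₂(s)·X(s)·log X(s) ds, where all integrals appearing are finite and X(s) log X(s) is interpreted as 0 when X(s) = 0. Set C₂(t) := ∫₀^t c₂(s) ds. Then for every t ≥ 0: X(t) + a(t) ≤ M(t)^{exp(C₂(t))} · exp( exp(C₂(t)) · ∫₀^t c₁(s)·exp(−C₂(s)) ds ). -/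
/-!
Put `m = M(T)` and `Y(t) = m + ∫₀ᵗ (c₁ X + c₂ X log X)`. Then `X + a ≤ Y` on `[0, T]`, and
since `x ↦ x log x` is nondecreasing below any `z ≥ 1`, `Y` satisfies the integral form of
`Y' ≤ c₁ Y + c₂ Y log Y`. The claimed bound is `exp b(T)`, where
`b = e^{C₂} (log m + ∫ c₁ e^{-C₂})` solves the linear equation `b' = c₁ + c₂ b`, so that `exp b`
solves `z' = c₁ z + c₂ z log z`. Perturbing to `b' = (1 + ε)(c₁ + c₂ b)`, `b(0) = log m + ε`
gives a strict supersolution, and `Y < exp b` on `[0, T]` by a first-crossing argument in which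
the convexity bound `e^y - e^x ≥ e^x (y - x)` replaces differentiation. Finally let `ε → 0`.
-/

open MeasureTheory intervalIntegral Set Filter Topology Real

theorem mul_log_le_mul_log_of_le {x z : ℝ} (hx : 0 ≤ x) (hxz : x ≤ z) (hz : 1 ≤ z) :
    x * log x ≤ z * log z := by
  rcases le_or_gt x 1 with hx1 | hx1
  · have : x * log x ≤ 0 := mul_nonpos_of_nonneg_of_nonpos hx (log_nonpos hx hx1)
    have : 0 ≤ z * log z := mul_nonneg (by linarith) (log_nonneg hz)
    linarith
  · exact mul_le_mul hxz (log_le_log (by linarith) hxz) (log_nonneg hx1.le) (by linarith)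

theorem exp_mul_sub_le_exp_sub_exp (x y : ℝ) : exp x * (y - x) ≤ exp y - exp x := by
  have := mul_le_mul_of_nonneg_left (add_one_le_exp (y - x)) (exp_pos x).le
  rw [← exp_add, add_sub_cancel] at this
  linarith

theorem IntervalIntegrable.mono_Icc {f : ℝ → ℝ} {a b u v : ℝ}
    (hf : IntervalIntegrable f volume a b) (hu : a ≤ u) (huv : u ≤ v) (hv : v ≤ b) :
    IntervalIntegrable f volume u v :=
  hf.mono_set (uIcc_subset_uIcc ⟨min_le_of_left_le hu, le_max_of_le_right (huv.trans hv)⟩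
    ⟨min_le_of_left_le (hu.trans huv), le_max_of_le_right hv⟩)

theorem MeasureTheory.LocallyIntegrableOn.intervalIntegrable_of_Ici {f : ℝ → ℝ} {a b : ℝ}
    (hf : LocallyIntegrableOn f (Ici a)) (hab : a ≤ b) : IntervalIntegrable f volume a b :=
  (intervalIntegrable_iff_integrableOn_Icc_of_le hab).2
    (hf.integrableOn_compact_subset Icc_subset_Ici_self isCompact_Icc)

theorem lt_on_Icc_of_forall_lt_on_Ico {Y Z : ℝ → ℝ} {a b : ℝ}
    (hY : ContinuousOn Y (Icc a b)) (hZ : ContinuousOn Z (Icc a b)) (ha : Y a < Z a)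
    (hstep : ∀ τ ∈ Ioc a b, (∀ s ∈ Ico a τ, Y s < Z s) → Y τ < Z τ) :
    ∀ t ∈ Icc a b, Y t < Z t := by
  by_contra! hbad
  have hS : IsClosed {t ∈ Icc a b | Z t ≤ Y t} := isClosed_Icc.isClosed_le hZ hY
  obtain ⟨τ, ⟨hτ, hτZY⟩, hleast⟩ :=
    (isCompact_Icc.of_isClosed_subset hS (sep_subset _ _)).exists_isLeast hbad
  have hτa : a < τ := hτ.1.lt_of_ne (by rintro rfl; linarith)
  refine (hstep τ ⟨hτa, hτ.2⟩ fun s hs => ?_).not_ge hτZY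
  by_contra! hs'
  exact (hleast ⟨⟨hs.1, hs.2.le.trans hτ.2⟩, hs'⟩).not_gt hs.2

/-- `exp ∘ logGronwallBound c₁ c₂ ρ K` solves `z' = ρ (c₁ z + c₂ z log z)` with `z 0 = exp K`. -/
noncomputable def logGronwallBound (c₁ c₂ : ℝ → ℝ) (ρ K t : ℝ) : ℝ :=
  exp (ρ * ∫ s in 0..t, c₂ s) * (K + ρ * ∫ s in 0..t, c₁ s * exp (-(ρ * ∫ r in 0..s, c₂ r)))

namespace logGronwallBound

variable {c₁ c₂ : ℝ → ℝ} {ρ K T : ℝ}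

@[simp]
theorem apply_zero : logGronwallBound c₁ c₂ ρ K 0 = K := by
  simp [logGronwallBound]

theorem intervalIntegrable_mul_exp (hc₁ : IntervalIntegrable c₁ volume 0 T)
    (hc₂ : IntervalIntegrable c₂ volume 0 T) :
    IntervalIntegrable (fun s => c₁ s * exp (-(ρ * ∫ r in 0..s, c₂ r))) volume 0 T := by
  have := continuousOn_primitive_interval' hc₂ left_mem_uIcc
  exact hc₁.mul_continuousOn (by fun_prop)

theorem continuousOn (hc₁ : IntervalIntegrable c₁ volume 0 T)
    (hc₂ : IntervalIntegrable c₂ volume 0 T) :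
    ContinuousOn (logGronwallBound c₁ c₂ ρ K) (Icc 0 T) := by
  have hC := continuousOn_primitive_interval' hc₂ left_mem_uIcc
  have hI := continuousOn_primitive_interval' (intervalIntegrable_mul_exp (ρ := ρ) hc₁ hc₂)
    left_mem_uIcc
  refine ContinuousOn.mono ?_ Icc_subset_uIcc
  unfold logGronwallBound
  fun_prop

theorem mul_add_le_sub (hc₁ : IntervalIntegrable c₁ volume 0 T)
    (hc₂ : IntervalIntegrable c₂ volume 0 T) (hc₁0 : ∀ s, 0 ≤ s → 0 ≤ c₁ s)
    (hc₂0 : ∀ s, 0 ≤ s → 0 ≤ c₂ s) (hρ : 0 ≤ ρ) (hK : 0 ≤ K) {u v : ℝ} (hu : 0 ≤ u)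
    (huv : u ≤ v) (hvT : v ≤ T) :
    ρ * (logGronwallBound c₁ c₂ ρ K u * (∫ s in u..v, c₂ s) + ∫ s in u..v, c₁ s) ≤
      logGronwallBound c₁ c₂ ρ K v - logGronwallBound c₁ c₂ ρ K u := by
  set C : ℝ → ℝ := fun t => ∫ s in 0..t, c₂ s
  set f : ℝ → ℝ := fun s => c₁ s * exp (-(ρ * C s))
  set I : ℝ → ℝ := fun t => ∫ s in 0..t, f s
  have hf : IntervalIntegrable f volume 0 T := intervalIntegrable_mul_exp hc₁ hc₂
  have hCuv : C v - C u = ∫ s in u..v, c₂ s :=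
    integral_interval_sub_left (hc₂.mono_Icc le_rfl (hu.trans huv) hvT)
      (hc₂.mono_Icc le_rfl hu (huv.trans hvT))
  have hIuv : I v - I u = ∫ s in u..v, f s :=
    integral_interval_sub_left (hf.mono_Icc le_rfl (hu.trans huv) hvT)
      (hf.mono_Icc le_rfl hu (huv.trans hvT))
  have hC_le : ∀ s ∈ Icc u v, C s ≤ C v := fun s hs =>
    integral_mono_interval le_rfl (hu.trans hs.1) hs.2
      (ae_restrict_of_forall_mem measurableSet_Ioc fun r hr => hc₂0 r hr.1.le)
      (hc₂.mono_Icc le_rfl (hu.trans huv) hvT)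
  have hIu : 0 ≤ I u :=
    intervalIntegral.integral_nonneg hu fun s hs => mul_nonneg (hc₁0 s hs.1) (exp_pos _).le
  have hexp := exp_mul_sub_le_exp_sub_exp (ρ * C u) (ρ * C v)
  have hP : ∫ s in u..v, c₁ s ≤ exp (ρ * C v) * (I v - I u) := by
    rw [hIuv, ← intervalIntegral.integral_const_mul]
    refine integral_mono_on huv (hc₁.mono_Icc hu huv hvT)
      ((hf.mono_Icc hu huv hvT).const_mul _) fun s hs => ?_
    have : 1 ≤ exp (ρ * C v) * exp (-(ρ * C s)) := by
      rw [← exp_add]; exact one_le_exp (by nlinarith [hC_le s hs])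
    nlinarith [hc₁0 s (hu.trans hs.1)]
  have hB : ∀ t, logGronwallBound c₁ c₂ ρ K t = exp (ρ * C t) * (K + ρ * I t) := fun _ => rfl
  rw [hB, hB, ← hCuv]
  nlinarith [mul_le_mul_of_nonneg_right hexp (by positivity : 0 ≤ K + ρ * I u)]

theorem pos (hc₁0 : ∀ s, 0 ≤ s → 0 ≤ c₁ s) (hρ : 0 ≤ ρ) (hK : 0 < K) {t : ℝ} (ht : 0 ≤ t) :
    0 < logGronwallBound c₁ c₂ ρ K t := by
  have : 0 ≤ ∫ s in 0..t, c₁ s * exp (-(ρ * ∫ r in 0..s, c₂ r)) :=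
    intervalIntegral.integral_nonneg ht fun s hs => mul_nonneg (hc₁0 s hs.1) (exp_pos _).le
  exact mul_pos (exp_pos _) (by positivity)

theorem le_of_one_le (hc₁ : IntervalIntegrable c₁ volume 0 T)
    (hc₂ : IntervalIntegrable c₂ volume 0 T) (hc₁0 : ∀ s, 0 ≤ s → 0 ≤ c₁ s)
    (hc₂0 : ∀ s, 0 ≤ s → 0 ≤ c₂ s) (hρ : 1 ≤ ρ) (hT : 0 ≤ T) :
    logGronwallBound c₁ c₂ ρ K T ≤ exp (ρ * ∫ s in 0..T, c₂ s) *
      (K + ρ * ∫ s in 0..T, c₁ s * exp (-∫ r in 0..s, c₂ r)) := by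
  have : ∫ s in 0..T, c₁ s * exp (-(ρ * ∫ r in 0..s, c₂ r)) ≤
      ∫ s in 0..T, c₁ s * exp (-∫ r in 0..s, c₂ r) := by
    refine integral_mono_on hT (intervalIntegrable_mul_exp hc₁ hc₂)
      (by simpa using intervalIntegrable_mul_exp (ρ := 1) hc₁ hc₂) fun s hs => ?_
    have : 0 ≤ ∫ r in 0..s, c₂ r := intervalIntegral.integral_nonneg hs.1 fun r hr => hc₂0 r hr.1
    exact mul_le_mul_of_nonneg_left (exp_le_exp.2 (by nlinarith)) (hc₁0 s hs.1)
  unfold logGronwallBound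
  gcongr

end logGronwallBound

theorem exists_mem_Ioo_lt_mul_of_continuousWithinAt {f g : ℝ → ℝ} {a τ ρ : ℝ} (haτ : a < τ)
    (hρ : 1 < ρ) (hf : ContinuousWithinAt f (Ioo a τ) τ) (hg : ContinuousWithinAt g (Ioo a τ) τ)
    (hf0 : 0 < f τ) (hg0 : 0 < g τ) : ∃ u ∈ Ioo a τ, f τ < ρ * f u ∧ g τ < ρ * g u := by
  have := right_nhdsWithin_Ioo_neBot haτ
  have hf' := (hf.tendsto.const_mul ρ).eventually_const_lt (by nlinarith : f τ < ρ * f τ)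
  have hg' := (hg.tendsto.const_mul ρ).eventually_const_lt (by nlinarith : g τ < ρ * g τ)
  exact (eventually_mem_nhdsWithin.and (hf'.and hg')).exists

/-- `hB_sub` is the integral form of `B' ≥ ρ (c₁ + c₂ B)`, making `exp ∘ B` a strict
supersolution of `z' = c₁ z + c₂ z log z`, of which `hY_sub` makes `Y` a subsolution. -/
theorem lt_exp_of_forall_sub_le {c₁ c₂ Y B : ℝ → ℝ} {ρ T : ℝ} (hρ : 1 < ρ)
    (hc₁0 : ∀ s, 0 ≤ s → 0 ≤ c₁ s) (hc₂0 : ∀ s, 0 ≤ s → 0 ≤ c₂ s)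
    (hY : ContinuousOn Y (Icc 0 T)) (hB : ContinuousOn B (Icc 0 T))
    (hB_pos : ∀ t ∈ Icc 0 T, 0 < B t)
    (hB_sub : ∀ u v, 0 ≤ u → u ≤ v → v ≤ T →
      ρ * (B u * (∫ s in u..v, c₂ s) + ∫ s in u..v, c₁ s) ≤ B v - B u)
    (hY_sub : ∀ u v z, 0 ≤ u → u ≤ v → v ≤ T → 1 ≤ z → (∀ s ∈ Ico u v, Y s ≤ z) →
      Y v - Y u ≤ (∫ s in u..v, c₁ s) * z + (∫ s in u..v, c₂ s) * (z * log z))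
    (h0 : Y 0 < exp (B 0)) :
    ∀ t ∈ Icc 0 T, Y t < exp (B t) := by
  have hc_int : ∀ c : ℝ → ℝ, (∀ s, 0 ≤ s → 0 ≤ c s) → ∀ u v, 0 ≤ u → u ≤ v →
      0 ≤ ∫ s in u..v, c s := fun c hc u v hu huv =>
    intervalIntegral.integral_nonneg huv fun s hs => hc s (hu.trans hs.1)
  have hB_mono : ∀ u v, 0 ≤ u → u ≤ v → v ≤ T → B u ≤ B v := fun u v hu huv hvT => by
    have := mul_nonneg (hB_pos u ⟨hu, huv.trans hvT⟩).le (hc_int c₂ hc₂0 u v hu huv)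
    nlinarith [hB_sub u v hu huv hvT, hc_int c₁ hc₁0 u v hu huv]
  refine lt_on_Icc_of_forall_lt_on_Ico hY (continuous_exp.comp_continuousOn hB) h0
    fun τ hτ hlt => ?_
  have hτI : τ ∈ Icc 0 T := ⟨hτ.1.le, hτ.2⟩
  have hsub : Ioo 0 τ ⊆ Icc 0 T := fun s hs => ⟨hs.1.le, hs.2.le.trans hτ.2⟩
  have hBτ := (hB τ hτI).mono hsub
  obtain ⟨u, ⟨hu0, huτ⟩, hZu, hZBu⟩ := exists_mem_Ioo_lt_mul_of_continuousWithinAt hτ.1 hρ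
    hBτ.rexp (hBτ.rexp.mul hBτ) (exp_pos _) (mul_pos (exp_pos _) (hB_pos τ hτI))
  have hYuτ := hY_sub u τ (exp (B τ)) hu0.le huτ.le hτ.2 (one_le_exp (hB_pos τ hτI).le)
    fun s hs => (hlt s ⟨hu0.le.trans hs.1, hs.2⟩).le.trans
      (exp_le_exp.2 (hB_mono s τ (hu0.le.trans hs.1) hs.2.le hτ.2))
  rw [log_exp] at hYuτ
  simp only [Pi.mul_apply] at hZBu
  have hZ_sub := exp_mul_sub_le_exp_sub_exp (B u) (B τ)
  have hBuτ := hB_sub u τ hu0.le huτ.le hτ.2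
  have hYu := hlt u ⟨hu0.le, huτ⟩
  have hP := hc_int c₁ hc₁0 u τ hu0.le huτ.le
  have hQ := hc_int c₂ hc₂0 u τ hu0.le huτ.le
  nlinarith [mul_le_mul_of_nonneg_left hZu.le hP, mul_le_mul_of_nonneg_left hZBu.le hQ,
    mul_le_mul_of_nonneg_left hBuτ (exp_pos (B u)).le]

theorem integral_mul_add_mul_mul_log_le {c₁ c₂ X : ℝ → ℝ} {u v z : ℝ} (huv : u ≤ v) (hz : 1 ≤ z)
    (hc₁ : IntervalIntegrable c₁ volume u v) (hc₂ : IntervalIntegrable c₂ volume u v)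
    (hg : IntervalIntegrable (fun s => c₁ s * X s + c₂ s * X s * log (X s)) volume u v)
    (hc₁0 : ∀ s ∈ Ioo u v, 0 ≤ c₁ s) (hc₂0 : ∀ s ∈ Ioo u v, 0 ≤ c₂ s)
    (hX0 : ∀ s ∈ Ioo u v, 0 ≤ X s) (hXz : ∀ s ∈ Ioo u v, X s ≤ z) :
    ∫ s in u..v, (c₁ s * X s + c₂ s * X s * log (X s)) ≤
      (∫ s in u..v, c₁ s) * z + (∫ s in u..v, c₂ s) * (z * log z) := by
  rw [← intervalIntegral.integral_mul_const, ← intervalIntegral.integral_mul_const,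
    ← integral_add (hc₁.mul_const z) (hc₂.mul_const _)]
  refine integral_mono_on_of_le_Ioo huv hg ((hc₁.mul_const z).add (hc₂.mul_const _))
    fun s hs => ?_
  rw [mul_assoc (c₂ s)]
  exact add_le_add (mul_le_mul_of_nonneg_left (hXz s hs) (hc₁0 s hs))
    (mul_le_mul_of_nonneg_left (mul_log_le_mul_log_of_le (hX0 s hs) (hXz s hs) hz) (hc₂0 s hs))

theorem add_integral_lt_exp_logGronwallBound {X c₁ c₂ : ℝ → ℝ} {m ρ K T : ℝ} (hρ : 1 < ρ)
    (hK : 0 < K) (hmK : m < exp K) (hX0 : ∀ t, 0 ≤ t → 0 ≤ X t)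
    (hc₁0 : ∀ t, 0 ≤ t → 0 ≤ c₁ t) (hc₂0 : ∀ t, 0 ≤ t → 0 ≤ c₂ t)
    (hc₁ : IntervalIntegrable c₁ volume 0 T) (hc₂ : IntervalIntegrable c₂ volume 0 T)
    (hg : IntervalIntegrable (fun s => c₁ s * X s + c₂ s * X s * log (X s)) volume 0 T)
    (hXY : ∀ t ∈ Icc 0 T, X t ≤ m + ∫ s in 0..t, (c₁ s * X s + c₂ s * X s * log (X s))) :
    ∀ t ∈ Icc 0 T, m + ∫ s in 0..t, (c₁ s * X s + c₂ s * X s * log (X s)) <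
      exp (logGronwallBound c₁ c₂ ρ K t) := by
  refine lt_exp_of_forall_sub_le hρ hc₁0 hc₂0
    (continuousOn_const.add ((continuousOn_primitive_interval' hg left_mem_uIcc).mono
      Icc_subset_uIcc))
    (logGronwallBound.continuousOn hc₁ hc₂)
    (fun t ht => logGronwallBound.pos hc₁0 (by linarith) hK ht.1)
    (fun u v hu huv hvT =>
      logGronwallBound.mul_add_le_sub hc₁ hc₂ hc₁0 hc₂0 (by linarith) hK.le hu huv hvT)
    (fun u v z hu huv hvT hz hYz => ?_) (by simpa using hmK)
  rw [add_sub_add_left_eq_sub, integral_interval_sub_left (hg.mono_Icc le_rfl (hu.trans huv) hvT)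
    (hg.mono_Icc le_rfl hu (huv.trans hvT))]
  have hs : ∀ s ∈ Ioo u v, 0 ≤ s := fun s hs => hu.trans hs.1.le
  exact integral_mul_add_mul_mul_log_le huv hz (hc₁.mono_Icc hu huv hvT) (hc₂.mono_Icc hu huv hvT)
    (hg.mono_Icc hu huv hvT) (fun s h => hc₁0 s (hs s h)) (fun s h => hc₂0 s (hs s h))
    (fun s h => hX0 s (hs s h))
    fun s h => (hXY s ⟨hs s h, h.2.le.trans hvT⟩).trans (hYz s (Ioo_subset_Ico_self h))

theorem log_gronwall_general
    (X a M c₁ c₂ : ℝ → ℝ)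
    (hX0 : ∀ t, 0 ≤ t → 0 ≤ X t) (ha0 : ∀ t, 0 ≤ t → 0 ≤ a t)
    (hc₁0 : ∀ t, 0 ≤ t → 0 ≤ c₁ t) (hc₂0 : ∀ t, 0 ≤ t → 0 ≤ c₂ t)
    (hM : MonotoneOn M (Set.Ici (0 : ℝ))) (hM1 : 1 < M 0)
    (hc₁ : LocallyIntegrableOn c₁ (Set.Ici (0 : ℝ)))
    (hc₂ : LocallyIntegrableOn c₂ (Set.Ici (0 : ℝ)))
    (hint₁ : ∀ t, 0 ≤ t → IntervalIntegrable (fun s => c₁ s * X s) volume 0 t)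
    (hint₂ : ∀ t, 0 ≤ t →
      IntervalIntegrable (fun s => c₂ s * X s * Real.log (X s)) volume 0 t)
    (hineq : ∀ t, 0 ≤ t →
      X t + a t ≤ M t + (∫ s in (0:ℝ)..t, c₁ s * X s)
        + ∫ s in (0:ℝ)..t, c₂ s * X s * Real.log (X s)) :
    ∀ t, 0 ≤ t →
      X t + a t ≤ M t ^ Real.exp (∫ s in (0:ℝ)..t, c₂ s)
        * Real.exp (Real.exp (∫ s in (0:ℝ)..t, c₂ s)
            * ∫ s in (0:ℝ)..t, c₁ s * Real.exp (-∫ r in (0:ℝ)..s, c₂ r)) := by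
  intro T hT
  set C := ∫ s in 0..T, c₂ s
  set J := ∫ s in 0..T, c₁ s * exp (-∫ r in 0..s, c₂ r)
  have hMT : 1 < M T := hM1.trans_le (hM self_mem_Ici hT hT)
  have hc₁T := hc₁.intervalIntegrable_of_Ici hT
  have hc₂T := hc₂.intervalIntegrable_of_Ici hT
  have hXY : ∀ t ∈ Icc 0 T, X t + a t ≤
      M T + ∫ s in 0..t, (c₁ s * X s + c₂ s * X s * log (X s)) := fun t ht => by
    rw [integral_add (hint₁ t ht.1) (hint₂ t ht.1)]
    linarith [hineq t ht.1, hM ht.1 hT ht.2]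
  have hε : ∀ ε > 0, X T + a T ≤ exp (exp ((1 + ε) * C) * (log (M T) + ε + (1 + ε) * J)) := by
    intro ε hε
    have hK : 0 < log (M T) + ε := by linarith [log_pos hMT]
    have hmK : M T < exp (log (M T) + ε) := by
      rw [exp_add, exp_log (by linarith)]
      nlinarith [add_one_le_exp ε]
    have hlt := add_integral_lt_exp_logGronwallBound (ρ := 1 + ε) (by linarith) hK hmK hX0
      hc₁0 hc₂0 hc₁T hc₂T ((hint₁ T hT).add (hint₂ T hT))
      (fun t ht => by linarith [hXY t ht, ha0 t ht.1]) T ⟨hT, le_rfl⟩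
    have hle := logGronwallBound.le_of_one_le (ρ := 1 + ε) (K := log (M T) + ε) hc₁T hc₂T
      hc₁0 hc₂0 (by linarith) hT
    exact (hXY T ⟨hT, le_rfl⟩).trans (hlt.le.trans (exp_le_exp.2 hle))
  have hlim : Tendsto (fun ε => exp (exp ((1 + ε) * C) * (log (M T) + ε + (1 + ε) * J)))
      (𝓝[>] 0) (𝓝 (exp (exp ((1 + 0) * C) * (log (M T) + 0 + (1 + 0) * J)))) :=
    ((by fun_prop : Continuous _).tendsto 0).mono_left nhdsWithin_le_nhds
  calc X T + a T ≤ exp (exp ((1 + 0) * C) * (log (M T) + 0 + (1 + 0) * J)) :=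
        ge_of_tendsto hlim (eventually_nhdsWithin_of_forall hε)
    _ = M T ^ exp C * exp (exp C * J) := by
        rw [rpow_def_of_pos (by linarith), ← exp_add]
        ring_nf

/-- Gronwall inequality with logarithmic nonlinearity: if
`X(t) + a(t) ≤ M(t) + ∫₀ᵗ c₁ X + ∫₀ᵗ c₂ X log X` for all `t ≥ 0`, with `X` continuous,
`M` nondecreasing, `M(0) > 1`, `c₁, c₂` locally integrable, all functions nonnegative, then
`X(t) + a(t) ≤ M(t)^{exp(C₂(t))} exp(exp(C₂(t)) ∫₀ᵗ c₁(s) exp(−C₂(s)) ds)`,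
where `C₂(t) = ∫₀ᵗ c₂`. -/
theorem log_gronwall
    (X a M c₁ c₂ : ℝ → ℝ)
    (hX : ContinuousOn X (Set.Ici (0 : ℝ)))
    (hX0 : ∀ t, 0 ≤ t → 0 ≤ X t) (ha0 : ∀ t, 0 ≤ t → 0 ≤ a t)
    (hM0 : ∀ t, 0 ≤ t → 0 ≤ M t)
    (hc₁0 : ∀ t, 0 ≤ t → 0 ≤ c₁ t) (hc₂0 : ∀ t, 0 ≤ t → 0 ≤ c₂ t)
    (hM : MonotoneOn M (Set.Ici (0 : ℝ))) (hM1 : 1 < M 0)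
    (hc₁ : LocallyIntegrableOn c₁ (Set.Ici (0 : ℝ)))
    (hc₂ : LocallyIntegrableOn c₂ (Set.Ici (0 : ℝ)))
    (hint₁ : ∀ t, 0 ≤ t → IntervalIntegrable (fun s => c₁ s * X s) volume 0 t)
    (hint₂ : ∀ t, 0 ≤ t →
      IntervalIntegrable (fun s => c₂ s * X s * Real.log (X s)) volume 0 t)
    (hineq : ∀ t, 0 ≤ t →
      X t + a t ≤ M t + (∫ s in (0:ℝ)..t, c₁ s * X s)
        + ∫ s in (0:ℝ)..t, c₂ s * X s * Real.log (X s)) :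
    ∀ t, 0 ≤ t →
      X t + a t ≤ M t ^ Real.exp (∫ s in (0:ℝ)..t, c₂ s)
        * Real.exp (Real.exp (∫ s in (0:ℝ)..t, c₂ s)
            * ∫ s in (0:ℝ)..t, c₁ s * Real.exp (-∫ r in (0:ℝ)..s, c₂ r)) :=
  log_gronwall_general X a M c₁ c₂ hX0 ha0 hc₁0 hc₂0 hM hM1 hc₁ hc₂ hint₁ hint₂ hineq
end

section
/- Define ρ : [0, ∞) → [0, ∞) by ρ(x) = x/e for 0 ≤ x < e and ρ(x) = log x for x ≥ e, and define Φ : [0, ∞) → [0, ∞) by Φ(z) = exp( ∫₀^z dx/(1 + x + x·ρ(x)) ). Then Φ is differentiable on [0, ∞) with derivative Φ'(z) = Φ(z)/(1 + z + z·ρ(z)) for all z ≥ 0, and Φ' is nonincreasing on [0, ∞) (i.e. Φ is concave). -/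
open MeasureTheory

/-- `ρ(x) = x/e` for `0 ≤ x < e`, `ρ(x) = log x` for `x ≥ e`. -/
noncomputable def rho (x : ℝ) : ℝ :=
  if x < Real.exp 1 then x / Real.exp 1 else Real.log x

/-- `Φ(z) = exp(∫₀ᶻ dx / (1 + x + x ρ(x)))`. -/
noncomputable def Phi (z : ℝ) : ℝ :=
  Real.exp (∫ x in (0:ℝ)..z, 1 / (1 + x + x * rho x))

/-!
The two branches of `ρ` meet at `e` with the same slope `1/e`, so `ρ` is differentiable with
`ρ'(x) = 1 / max x e`. Hence `D(x) = 1 + x + x ρ(x)` is positive and differentiable, with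
`D' = 1 + ρ + x ρ' ≥ 1` on `[0, ∞)`. By the fundamental theorem of calculus `Φ' = Φ / D`, and then
`(Φ / D)' = Φ (1 - D') / D² ≤ 0`.
-/

open Real Set

lemma rho_of_le_exp_one {x : ℝ} (hx : x ≤ exp 1) : rho x = x / exp 1 := by
  rcases hx.lt_or_eq with hx | rfl
  · simp [rho, hx]
  · simp [rho]

lemma rho_of_exp_one_le {x : ℝ} (hx : exp 1 ≤ x) : rho x = log x := by
  simp [rho, not_lt.2 hx]

lemma rho_nonneg {x : ℝ} (hx : 0 ≤ x) : 0 ≤ rho x := by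
  rcases le_total x (exp 1) with h | h
  · rw [rho_of_le_exp_one h]; positivity
  · rw [rho_of_exp_one_le h]; exact log_nonneg (one_le_exp zero_le_one |>.trans h)

lemma hasDerivAt_rho (x : ℝ) : HasDerivAt rho (max x (exp 1))⁻¹ x := by
  have hlin (y : ℝ) : HasDerivAt (fun t => t / exp 1) (exp 1)⁻¹ y := by
    simpa using (hasDerivAt_id y).div_const (exp 1)
  rcases lt_trichotomy x (exp 1) with hx | rfl | hx
  · rw [max_eq_right hx.le]
    refine (hlin x).congr_of_eventuallyEq ?_
    filter_upwards [Iio_mem_nhds hx] with y hy using rho_of_le_exp_one hy.le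
  · rw [max_self, ← hasDerivWithinAt_univ, ← Iic_union_Ici]
    exact ((hlin _).hasDerivWithinAt.congr_of_mem (fun y hy => rho_of_le_exp_one hy)
        self_mem_Iic).union
      ((hasDerivAt_log (exp_ne_zero 1)).hasDerivWithinAt.congr_of_mem
        (fun y hy => rho_of_exp_one_le hy) self_mem_Ici)
  · rw [max_eq_left hx.le]
    refine (hasDerivAt_log (exp_pos 1 |>.trans hx).ne').congr_of_eventuallyEq ?_
    filter_upwards [Ioi_mem_nhds hx] with y hy using rho_of_exp_one_le hy.le

@[fun_prop]
lemma continuous_rho : Continuous rho :=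
  continuous_iff_continuousAt.2 fun x => (hasDerivAt_rho x).continuousAt

lemma hasDerivAt_one_add_add_mul_rho (x : ℝ) :
    HasDerivAt (fun x => 1 + x + x * rho x) (1 + (rho x + x * (max x (exp 1))⁻¹)) x :=
  (((hasDerivAt_id' x).const_add 1).add ((hasDerivAt_id' x).mul (hasDerivAt_rho x))).congr_deriv
    (by ring)

-- For `x ≤ e` this is `(x ^ 2 + e x + e) / e`, whose discriminant `e² - 4e` is negative.
lemma one_add_add_mul_rho_pos (x : ℝ) : 0 < 1 + x + x * rho x := by
  rcases le_total x (exp 1) with h | h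
  · have he : 0 < exp 1 := exp_pos 1
    have hquad : 0 < x ^ 2 + exp 1 * x + exp 1 := by
      nlinarith [sq_nonneg (2 * x + exp 1), exp_one_lt_d9]
    have : 1 + x + x * rho x = (x ^ 2 + exp 1 * x + exp 1) / exp 1 := by
      rw [rho_of_le_exp_one h]; field_simp; ring
    rw [this]; positivity
  · have hx : 0 ≤ x := (exp_pos 1).le.trans h
    nlinarith [rho_nonneg hx]

lemma hasDerivAt_Phi (z : ℝ) : HasDerivAt Phi (Phi z / (1 + z + z * rho z)) z := by
  have hcont : Continuous fun x => 1 / (1 + x + x * rho x) :=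
    continuous_const.div (by fun_prop) fun x => (one_add_add_mul_rho_pos x).ne'
  rw [div_eq_mul_one_div]
  exact (hasDerivAt_exp _).comp z <| intervalIntegral.integral_hasDerivAt_right
    (hcont.intervalIntegrable _ _) (hcont.stronglyMeasurableAtFilter _ _) hcont.continuousAt

lemma antitoneOn_div_of_hasDerivAt {F G G' : ℝ → ℝ} {s : Set ℝ} (hs : Convex ℝ s)
    (hF : ∀ x ∈ s, HasDerivAt F (F x / G x) x) (hG : ∀ x ∈ s, HasDerivAt G (G' x) x)
    (hG₀ : ∀ x ∈ s, G x ≠ 0) (hF₀ : ∀ x ∈ s, 0 ≤ F x) (hG' : ∀ x ∈ s, 1 ≤ G' x) :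
    AntitoneOn (fun x => F x / G x) s := by
  have hderiv : ∀ x ∈ s, HasDerivAt (fun x => F x / G x) (F x * (1 - G' x) / G x ^ 2) x := by
    intro x hx
    refine ((hF x hx).div (hG x hx) (hG₀ x hx)).congr_deriv ?_
    field_simp [hG₀ x hx]
  refine antitoneOn_of_hasDerivWithinAt_nonpos hs
    (fun x hx => (hderiv x hx).continuousAt.continuousWithinAt)
    (fun x hx => (hderiv x (interior_subset hx)).hasDerivWithinAt) fun x hx => ?_
  have hx := interior_subset hx
  exact div_nonpos_of_nonpos_of_nonneg
    (mul_nonpos_of_nonneg_of_nonpos (hF₀ x hx) (by linarith [hG' x hx])) (sq_nonneg _)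

/-- `Φ` is differentiable on `[0, ∞)` with `Φ'(z) = Φ(z)/(1 + z + z ρ(z))`,
and `Φ'` is nonincreasing on `[0, ∞)` (so `Φ` is concave). -/
theorem Phi_deriv_and_concave :
    (∀ z ∈ Set.Ici (0 : ℝ),
      HasDerivWithinAt Phi (Phi z / (1 + z + z * rho z)) (Set.Ici (0 : ℝ)) z) ∧
    AntitoneOn (fun z => Phi z / (1 + z + z * rho z)) (Set.Ici (0 : ℝ)) := by
  refine ⟨fun z _ => (hasDerivAt_Phi z).hasDerivWithinAt, ?_⟩
  refine antitoneOn_div_of_hasDerivAt (convex_Ici 0) (fun z _ => hasDerivAt_Phi z)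
    (fun x _ => hasDerivAt_one_add_add_mul_rho x) (fun x _ => (one_add_add_mul_rho_pos x).ne')
    (fun z _ => (exp_pos _).le) fun x (hx : 0 ≤ x) => ?_
  have : 0 ≤ x * (max x (exp 1))⁻¹ := by positivity
  linarith [rho_nonneg hx]
end
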